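/- arXiv:2307.00836 — 6 statements merged into one kernel-verified Lean document; each statement's English description precedes it below -/
import Mathlib

section
/- Let K ≥ 1, let y ∈ {-1,1}, let p_1,…,p_K ∈ (0,1), and let Z_1,…,Z_K be independent {-1,1}-valued random variables with P(Z_j = y) = p_j for each j. Define weights w_j = (1/2)·ln(p_j/(1−p_j)) and the aggregated prediction ŷ = sign(Σ_{j=1}^K w_j Z_j), with the convention sign(0) = 1. Then P(ŷ ≠ y) ≤ exp(−2 Σ_{j=1}^K (1/2 − p_j)²). -/
open MeasureTheory ProbabilityTheory

noncomputable section

/-!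
Chernoff bound: a wrong vote forces `y · ∑ wⱼ Zⱼ ≤ 0`, so by Markov's inequality and
independence the error probability is at most `∏ⱼ E[exp(-y wⱼ Zⱼ)]`. For the log-odds weight
each factor is `exp(-wⱼ) pⱼ + exp(wⱼ) (1 - pⱼ) = 2 √(pⱼ (1 - pⱼ))`, and
`4 p (1 - p) = 1 - 4 (1/2 - p)² ≤ exp(-4 (1/2 - p)²)`.
-/

def sgn (x : ℝ) : ℝ := if 0 ≤ x then 1 else -1

def logOddsWeight (p : ℝ) : ℝ := (1/2) * Real.log (p / (1 - p))

lemma two_sqrt_mul_one_sub_le_exp (p : ℝ) :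
    2 * √(p * (1 - p)) ≤ Real.exp (-2 * (1/2 - p)^2) := by
  have hquad : 4 * (p * (1 - p)) ≤ Real.exp (-4 * (1/2 - p)^2) := by
    nlinarith [Real.add_one_le_exp (-4 * (1/2 - p)^2)]
  calc 2 * √(p * (1 - p)) = √(4 * (p * (1 - p))) := by
        rw [Real.sqrt_mul zero_le_four, show (4 : ℝ) = 2 ^ 2 by norm_num,
          Real.sqrt_sq zero_le_two]
    _ ≤ √(Real.exp (-4 * (1/2 - p)^2)) := Real.sqrt_le_sqrt hquad
    _ = Real.exp (-2 * (1/2 - p)^2) := by rw [← Real.exp_half]; ring_nf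

lemma exp_logOddsWeight {p : ℝ} (hp : p ∈ Set.Ioo 0 1) :
    Real.exp (logOddsWeight p) = √p / √(1 - p) := by
  have hq : 0 < 1 - p := sub_pos.2 hp.2
  rw [← Real.sqrt_div' _ hq.le, logOddsWeight, one_div_mul_eq_div, Real.exp_half,
    Real.exp_log (div_pos hp.1 hq)]

lemma exp_neg_logOddsWeight_mul_add {p : ℝ} (hp : p ∈ Set.Ioo 0 1) :
    Real.exp (-logOddsWeight p) * p + Real.exp (logOddsWeight p) * (1 - p)
      = 2 * √(p * (1 - p)) := by
  obtain ⟨hp0, hp1⟩ := hp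
  have ha := Real.sq_sqrt hp0.le
  have hb := Real.sq_sqrt (sub_pos.2 hp1).le
  have ha0 := Real.sqrt_pos.2 hp0
  have hb0 := Real.sqrt_pos.2 (sub_pos.2 hp1)
  rw [Real.exp_neg, exp_logOddsWeight ⟨hp0, hp1⟩, inv_div, Real.sqrt_mul hp0.le]
  field_simp
  nlinarith

lemma measure_sum_nonneg_le_prod_lintegral_exp {Ω ι : Type*} [MeasurableSpace Ω]
    {μ : Measure Ω} {X : ι → Ω → ℝ} (hX : ∀ i, Measurable (X i)) (hind : iIndepFun X μ)
    (s : Finset ι) :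
    μ {ω | 0 ≤ ∑ i ∈ s, X i ω} ≤ ∏ i ∈ s, ∫⁻ ω, ENNReal.ofReal (Real.exp (X i ω)) ∂μ := by
  set E : ι → Ω → ENNReal := fun i ω => ENNReal.ofReal (Real.exp (X i ω))
  have hE : ∀ i, Measurable (E i) := fun i =>
    ENNReal.measurable_ofReal.comp (Real.measurable_exp.comp (hX i))
  have hprod : ∀ ω, ∏ i ∈ s, E i ω = ENNReal.ofReal (Real.exp (∑ i ∈ s, X i ω)) := fun ω => by
    rw [Real.exp_sum, ENNReal.ofReal_prod_of_nonneg fun i _ => (Real.exp_pos _).le]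
  calc μ {ω | 0 ≤ ∑ i ∈ s, X i ω} ≤ μ {ω | 1 ≤ ∏ i ∈ s, E i ω} := by
        refine measure_mono fun ω hω => ?_
        simp only [Set.mem_ofPred_eq, hprod] at hω ⊢
        exact ENNReal.one_le_ofReal.2 (Real.one_le_exp hω)
    _ ≤ ∫⁻ ω, ∏ i ∈ s, E i ω ∂μ := by
        simpa using mul_meas_ge_le_lintegral₀ (s.measurable_prod fun i _ => hE i).aemeasurable 1
    _ = ∏ i ∈ s, ∫⁻ ω, E i ω ∂μ := lintegral_prod_eq_prod_lintegral_of_indepFun s E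
        (hind.comp _ fun i => ENNReal.measurable_ofReal.comp Real.measurable_exp) hE

lemma lintegral_comp_eq_of_forall_eq_or_eq {Ω α : Type*} [MeasurableSpace Ω] [MeasurableSpace α]
    [MeasurableSingletonClass α] {μ : Measure Ω} {Z : Ω → α} (hZ : Measurable Z) {a b : α}
    (hval : ∀ ω, Z ω = a ∨ Z ω = b) (f : α → ENNReal) :
    ∫⁻ ω, f (Z ω) ∂μ = f a * μ {ω | Z ω = a} + f b * μ {ω | Z ω = a}ᶜ := by
  classical
  have hA : MeasurableSet {ω | Z ω = a} := hZ (measurableSet_singleton a)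
  have hpiece : (fun ω => f (Z ω)) = {ω | Z ω = a}.piecewise (fun _ => f a) (fun _ => f b) := by
    funext ω
    by_cases h : Z ω = a
    · simp [h]
    · rw [Set.piecewise_eq_of_notMem (s := {ω | Z ω = a}) _ _ h, (hval ω).resolve_left h]
  rw [hpiece, lintegral_piecewise hA, setLIntegral_const,
    setLIntegral_const]

lemma lintegral_exp_neg_logOddsWeight_le {Ω : Type*} [MeasurableSpace Ω] {μ : Measure Ω}
    [IsProbabilityMeasure μ] {Z : Ω → ℝ} (hZ : Measurable Z) {y p : ℝ} (hy : y * y = 1)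
    (hp : p ∈ Set.Ioo 0 1) (hZval : ∀ ω, Z ω = y ∨ Z ω = -y)
    (hprob : μ {ω | Z ω = y} = ENNReal.ofReal p) :
    ∫⁻ ω, ENNReal.ofReal (Real.exp (-(y * (logOddsWeight p * Z ω)))) ∂μ
      ≤ ENNReal.ofReal (Real.exp (-2 * (1/2 - p)^2)) := by
  set w := logOddsWeight p
  have hagree : -(y * (w * y)) = -w := by linear_combination (-w) * hy
  have hdisagree : -(y * (w * -y)) = w := by linear_combination w * hy
  rw [lintegral_comp_eq_of_forall_eq_or_eq hZ hZval
      (fun z => ENNReal.ofReal (Real.exp (-(y * (w * z))))),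
    prob_compl_eq_one_sub (s := {ω | Z ω = y}) (hZ (measurableSet_singleton y)), hprob, hagree, hdisagree,
    ← ENNReal.ofReal_one, ← ENNReal.ofReal_sub _ hp.1.le, ← ENNReal.ofReal_mul (Real.exp_pos _).le,
    ← ENNReal.ofReal_mul (Real.exp_pos _).le, ← ENNReal.ofReal_add (mul_nonneg (Real.exp_pos _).le hp.1.le)
      (mul_nonneg (Real.exp_pos _).le (sub_nonneg.2 hp.2.le)),
    exp_neg_logOddsWeight_mul_add hp]
  exact ENNReal.ofReal_le_ofReal (two_sqrt_mul_one_sub_le_exp p)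

lemma mul_nonpos_of_sgn_ne {y s : ℝ} (hy : y = 1 ∨ y = -1) (h : sgn s ≠ y) : y * s ≤ 0 := by
  unfold sgn at h
  rcases hy with rfl | rfl <;> split_ifs at h <;> first | exact absurd rfl h | linarith

theorem stmt0_general {Ω : Type*} [MeasurableSpace Ω] (μ : Measure Ω) [IsProbabilityMeasure μ]
    (K : ℕ) (y : ℝ) (hy : y = 1 ∨ y = -1)
    (p : Fin K → ℝ) (hp : ∀ j, p j ∈ Set.Ioo (0:ℝ) 1)
    (Z : Fin K → Ω → ℝ) (hZmeas : ∀ j, Measurable (Z j))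
    (hZval : ∀ j ω, Z j ω = 1 ∨ Z j ω = -1)
    (hindep : iIndepFun Z μ)
    (hprob : ∀ j, μ {ω | Z j ω = y} = ENNReal.ofReal (p j)) :
    μ {ω | sgn (∑ j, (1/2) * Real.log (p j / (1 - p j)) * Z j ω) ≠ y}
      ≤ ENNReal.ofReal (Real.exp (-2 * ∑ j, (1/2 - p j)^2)) := by
  have hy2 : y * y = 1 := by rcases hy with rfl | rfl <;> norm_num
  have hZy : ∀ j ω, Z j ω = y ∨ Z j ω = -y := fun j ω => by
    rcases hy with rfl | rfl <;> rcases hZval j ω with h | h <;> simp [h]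
  set X : Fin K → Ω → ℝ := fun j ω => -(y * (logOddsWeight (p j) * Z j ω))
  have herr : {ω | sgn (∑ j, logOddsWeight (p j) * Z j ω) ≠ y} ⊆ {ω | 0 ≤ ∑ j, X j ω} :=
    fun ω hω => by
      simpa [X, Finset.mul_sum] using mul_nonpos_of_sgn_ne hy hω
  calc μ {ω | sgn (∑ j, logOddsWeight (p j) * Z j ω) ≠ y}
      ≤ μ {ω | 0 ≤ ∑ j, X j ω} := measure_mono herr
    _ ≤ ∏ j, ∫⁻ ω, ENNReal.ofReal (Real.exp (X j ω)) ∂μ :=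
        measure_sum_nonneg_le_prod_lintegral_exp
          (fun j => (((hZmeas j).const_mul _).const_mul y).neg)
          (hindep.comp _ fun j => ((measurable_id.const_mul _).const_mul y).neg) _
    _ ≤ ∏ j, ENNReal.ofReal (Real.exp (-2 * (1/2 - p j)^2)) := Finset.prod_le_prod' fun j _ =>
        lintegral_exp_neg_logOddsWeight_le (hZmeas j) hy2 (hp j) (hZy j) (hprob j)
    _ = ENNReal.ofReal (Real.exp (-2 * ∑ j, (1/2 - p j)^2)) := by
        rw [← ENNReal.ofReal_prod_of_nonneg fun j _ => (Real.exp_pos _).le, ← Real.exp_sum,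
          Finset.mul_sum]

/-- Let `K ≥ 1`, `y ∈ {-1,1}`, `p_1,…,p_K ∈ (0,1)`, and let
`Z_1,…,Z_K` be independent `{-1,1}`-valued random variables with `P(Z_j = y) = p_j`.
With weights `w_j = (1/2)·ln(p_j/(1−p_j))` and aggregated prediction
`ŷ = sign(∑_j w_j Z_j)` (with `sign 0 = 1`), one has
`P(ŷ ≠ y) ≤ exp(−2 ∑_j (1/2 − p_j)²)`. -/
theorem stmt0 {Ω : Type*} [MeasurableSpace Ω] (μ : Measure Ω) [IsProbabilityMeasure μ]
    (K : ℕ) (hK : 1 ≤ K) (y : ℝ) (hy : y = 1 ∨ y = -1)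
    (p : Fin K → ℝ) (hp : ∀ j, p j ∈ Set.Ioo (0:ℝ) 1)
    (Z : Fin K → Ω → ℝ) (hZmeas : ∀ j, Measurable (Z j))
    (hZval : ∀ j ω, Z j ω = 1 ∨ Z j ω = -1)
    (hindep : iIndepFun Z μ)
    (hprob : ∀ j, μ {ω | Z j ω = y} = ENNReal.ofReal (p j)) :
    μ {ω | sgn (∑ j, (1/2) * Real.log (p j / (1 - p j)) * Z j ω) ≠ y}
      ≤ ENNReal.ofReal (Real.exp (-2 * ∑ j, (1/2 - p j)^2)) :=
  stmt0_general μ K y hy p hp Z hZmeas hZval hindep hprob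

end
end

section
/- Let x ∈ ℝ and y ∈ {-1,1}, and use the convention sign(0) = 1. Then (if sign(x) = y then (1/2)·exp(−|x|) else 1 − (1/2)·exp(−|x|)) ≤ (1/2)·exp(−y·x). Equivalently, the randomized prediction ŷ that equals sign(x) with probability 1 − (1/2)e^{−|x|} and −sign(x) with probability (1/2)e^{−|x|} satisfies P(ŷ ≠ y) ≤ (1/2)·exp(−y·x). -/
noncomputable section

lemma aux_key (a : ℝ) : 1 - (1/2) * Real.exp (-a) ≤ (1/2) * Real.exp a := by
  have h1 := Real.exp_pos a
  have h2 := Real.exp_pos (-a)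
  have h3 : Real.exp a * Real.exp (-a) = 1 := by
    rw [← Real.exp_add]; simp
  nlinarith [sq_nonneg (Real.exp a - 1)]

/-- for `x ∈ ℝ` and `y ∈ {-1,1}` (with `sign 0 = 1`),
`(if sign x = y then (1/2)e^{−|x|} else 1 − (1/2)e^{−|x|}) ≤ (1/2)e^{−yx}`;
i.e. the randomized prediction equal to `sign x` with probability `1 − (1/2)e^{−|x|}`
and `−sign x` with probability `(1/2)e^{−|x|}` errs with probability at most
`(1/2)exp(−y·x)`. -/
theorem stmt3 (x y : ℝ) (hy : y = 1 ∨ y = -1) :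
    (if sgn x = y then (1/2) * Real.exp (-|x|) else 1 - (1/2) * Real.exp (-|x|))
      ≤ (1/2) * Real.exp (-(y * x)) := by
  unfold sgn
  rcases hy with rfl | rfl <;> rcases le_or_gt 0 x with hx | hx
  · rw [abs_of_nonneg hx]; norm_num; rw [if_pos hx]
  · rw [abs_of_neg hx]
    simp only [if_neg (not_le.mpr hx)]
    norm_num
    simpa using aux_key (-x)
  · rw [abs_of_nonneg hx]
    simp only [if_pos hx]
    norm_num
    simpa using aux_key x
  · rw [abs_of_neg hx]
    simp only [if_neg (not_le.mpr hx), if_pos rfl]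
    norm_num
end
end

section
/- For q ∈ [0,1]^K define Φ(q) = exp(−2 Σ_{j=1}^K (1/2 − q_j)²). Then for all q, q' ∈ [0,1]^K, Φ(q) − Φ(q') ≤ (1/8)·Φ(q) + 48·K·Σ_{j=1}^K (q_j − q'_j)². -/
/-- with `Φ(q) = exp(−2 ∑_j (1/2 − q_j)²)`, for all `q, q' ∈ [0,1]^K`,
`Φ(q) − Φ(q') ≤ (1/8)·Φ(q) + 48·K·∑_j (q_j − q'_j)²`. -/
theorem stmt8 (K : ℕ) (q q' : Fin K → ℝ)
    (hq : ∀ j, q j ∈ Set.Icc (0:ℝ) 1) (hq' : ∀ j, q' j ∈ Set.Icc (0:ℝ) 1) :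
    Real.exp (-2 * ∑ j, (1/2 - q j)^2) - Real.exp (-2 * ∑ j, (1/2 - q' j)^2)
      ≤ (1/8) * Real.exp (-2 * ∑ j, (1/2 - q j)^2) + 48 * K * ∑ j, (q j - q' j)^2 := by
  set S : ℝ := ∑ j, (1/2 - q j)^2 with hS
  set S' : ℝ := ∑ j, (1/2 - q' j)^2 with hS'
  set D : ℝ := ∑ j, |q j - q' j| with hD
  set T : ℝ := ∑ j, (q j - q' j)^2 with hT
  have hDnn : 0 ≤ D := Finset.sum_nonneg fun j _ => abs_nonneg _
  have hTnn : 0 ≤ T := Finset.sum_nonneg fun j _ => sq_nonneg _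
  have hSnn : 0 ≤ S := Finset.sum_nonneg fun j _ => sq_nonneg _
  -- 1 - exp(-x) ≤ x
  have h1 : Real.exp (-2*S) - Real.exp (-2*S') ≤ Real.exp (-2*S) * (2*(S' - S)) := by
    have := Real.add_one_le_exp (2*S - 2*S')
    have h2 : Real.exp (-2*S') = Real.exp (-2*S) * Real.exp (2*S - 2*S') := by
      rw [← Real.exp_add]; ring_nf
    nlinarith [Real.exp_pos (-2*S)]
  -- S' - S ≤ D
  have h2 : S' - S ≤ D := by
    rw [hS, hS', hD, ← Finset.sum_sub_distrib]
    apply Finset.sum_le_sum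
    intro j _
    obtain ⟨h0, h1'⟩ := hq j
    obtain ⟨h0', h1''⟩ := hq' j
    rcases abs_cases (q j - q' j) with ⟨he, _⟩ | ⟨he, _⟩ <;> nlinarith
  -- exp(-2S) ≤ 1
  have h3 : Real.exp (-2*S) ≤ 1 := by
    rw [show (1:ℝ) = Real.exp 0 by simp]
    apply Real.exp_le_exp.2; linarith
  -- D^2 ≤ K * T
  have h4 : D^2 ≤ K * T := by
    have := sq_sum_le_card_mul_sum_sq (s := Finset.univ) (f := fun j => |q j - q' j|)
    simpa [hD, hT, sq_abs] using this
  have hx := Real.exp_pos (-2*S)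
  nlinarith [sq_nonneg (Real.exp (-2*S) - 8*D), mul_le_mul_of_nonneg_left h2 (by positivity : (0:ℝ) ≤ 2 * Real.exp (-2*S))]
end

section
/- Let K ≥ 1, δ ∈ (0,1), L = ln(3/δ). For each j ∈ {1,…,K} let n_j ≥ 1 be an integer and let p̂_j, p_j ∈ [0,1] satisfy |p̂_j − p_j| ≤ √(2·p̂_j(1−p̂_j)·L/n_j) + 3L/n_j. Then, with Φ(q) = exp(−2 Σ_{j=1}^K (1/2 − q_j)²), one has (3/4)·Φ(p̂) ≤ (7/8)·Φ(p) + 96·K·Σ_{j=1}^K ( 2L/n_j + (3L/n_j)² ). -/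
/-- Per-coordinate key estimate. -/
lemma aux9 (Kr b d c e : ℝ) (hKr : 1 ≤ Kr) (hc0 : 0 ≤ c) (hc : c ≤ 1/2)
    (hb : |b| ≤ 1/2) (he0 : 0 ≤ e) (hes : e ≤ 1/256)
    (hd : |d| ≤ Real.sqrt (c*e) + 3*e) :
    8*Kr*((b+d)^2 - b^2) ≤ b^2 + (32*Kr^2 + 33*Kr)*e := by
  set s := Real.sqrt (c*e) with hs
  have hs0 : 0 ≤ s := Real.sqrt_nonneg _
  have hs2 : s^2 = c*e := Real.sq_sqrt (mul_nonneg hc0 he0)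
  have hs2' : s^2 ≤ e/2 := by nlinarith [mul_nonneg (show (0:ℝ) ≤ 1/2 - c by linarith) he0]
  have hB0 : 0 ≤ |b| := abs_nonneg b
  have hD0 : 0 ≤ |d| := abs_nonneg d
  have hbD : b * d ≤ |b| * |d| := by rw [← abs_mul]; exact le_abs_self _
  have hDsq : d^2 ≤ (s + 3*e)^2 := by
    rw [← sq_abs d]; exact pow_le_pow_left₀ hD0 hd 2
  have hb2 : b^2 = |b|^2 := (sq_abs b).symm
  have hcross : (s+3*e)^2 ≤ (9/8)*e := by
    nlinarith [sq_nonneg (s - 3*e), mul_le_mul_of_nonneg_left hes he0]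
  have h1 : 16*Kr*(|b| * s) ≤ |b|^2 + 32*Kr^2*e := by
    nlinarith [sq_nonneg (|b| - 8*Kr*s),
      mul_le_mul_of_nonneg_left hs2' (show (0:ℝ) ≤ 64*Kr^2 by positivity)]
  have h2 : 16*Kr*(|b| * (3*e)) ≤ 24*Kr*e := by
    nlinarith [mul_le_mul_of_nonneg_left hb (show (0:ℝ) ≤ 48*Kr*e by positivity)]
  have hKr0 : (0:ℝ) ≤ 16*Kr := by linarith
  have h3 : 16*Kr*(b * d) ≤ 16*Kr*(|b| * |d|) := mul_le_mul_of_nonneg_left hbD hKr0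
  have h4 : |b| * |d| ≤ |b| * (s+3*e) := mul_le_mul_of_nonneg_left hd hB0
  have h5 : 16*Kr*(|b| * |d|) ≤ 16*Kr*(|b| * (s+3*e)) := mul_le_mul_of_nonneg_left h4 hKr0
  have h6 : 8*Kr*(d^2) ≤ 8*Kr*((9/8)*e) :=
    mul_le_mul_of_nonneg_left (le_trans hDsq hcross) (by linarith)
  nlinarith [h1, h2, h3, h5, h6]

set_option maxHeartbeats 1000000 in
/-- Let `K ≥ 1`, `δ ∈ (0,1)`, `L = ln(3/δ)`. For each `j` let `n_j ≥ 1`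
and `p̂_j, p_j ∈ [0,1]` satisfy `|p̂_j − p_j| ≤ √(2 p̂_j(1−p̂_j) L/n_j) + 3L/n_j`. Then,
with `Φ(q) = exp(−2 ∑_j (1/2 − q_j)²)`,
`(3/4)·Φ(p̂) ≤ (7/8)·Φ(p) + 96·K·∑_j (2L/n_j + (3L/n_j)²)`. -/
theorem stmt9 (K : ℕ) (hK : 1 ≤ K) (δ L : ℝ) (hδ : δ ∈ Set.Ioo (0:ℝ) 1)
    (hL : L = Real.log (3/δ)) (n : Fin K → ℕ) (hn : ∀ j, 1 ≤ n j)
    (phat p : Fin K → ℝ) (hphat : ∀ j, phat j ∈ Set.Icc (0:ℝ) 1)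
    (hp : ∀ j, p j ∈ Set.Icc (0:ℝ) 1)
    (herr : ∀ j, |phat j - p j|
      ≤ Real.sqrt (2 * phat j * (1 - phat j) * L / n j) + 3 * L / n j) :
    (3/4) * Real.exp (-2 * ∑ j, (1/2 - phat j)^2)
      ≤ (7/8) * Real.exp (-2 * ∑ j, (1/2 - p j)^2)
        + 96 * K * ∑ j, (2 * L / n j + (3 * L / n j)^2) := by
  have hL0 : 0 ≤ L := by
    rw [hL]
    apply Real.log_nonneg
    rw [le_div_iff₀ hδ.1]
    linarith [hδ.2]
  have hKr : (1:ℝ) ≤ (K:ℝ) := by exact_mod_cast hK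
  have hN : ∀ j, (1:ℝ) ≤ (n j : ℝ) := fun j => by exact_mod_cast hn j
  have he0 : ∀ j, (0:ℝ) ≤ L / (n j : ℝ) := fun j => div_nonneg hL0 (by linarith [hN j])
  have hterm0 : ∀ j, (0:ℝ) ≤ 2 * L / (n j : ℝ) + (3 * L / (n j : ℝ))^2 := fun j => by
    have : (0:ℝ) ≤ 2 * L / (n j : ℝ) := div_nonneg (by linarith) (by linarith [hN j])
    nlinarith [sq_nonneg (3 * L / (n j : ℝ))]
  have hW0 : (0:ℝ) ≤ ∑ j, (2 * L / (n j : ℝ) + (3 * L / (n j : ℝ))^2) :=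
    Finset.sum_nonneg fun j _ => hterm0 j
  have hS0 : (0:ℝ) ≤ ∑ j, (1/2 - phat j)^2 := Finset.sum_nonneg fun j _ => sq_nonneg _
  set S := ∑ j, (1/2 - phat j)^2 with hSdef
  set T := ∑ j, (1/2 - p j)^2 with hTdef
  set W := ∑ j, (2 * L / (n j : ℝ) + (3 * L / (n j : ℝ))^2) with hWdef
  by_cases hcase : (3/4:ℝ) ≤ 96 * (K:ℝ) * W
  · -- trivial case
    have hexp1 : Real.exp (-2 * S) ≤ 1 := Real.exp_le_one_iff.mpr (by linarith)
    have hexp2 : (0:ℝ) ≤ Real.exp (-2 * T) := (Real.exp_pos _).le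
    nlinarith
  · push_neg at hcase
    have hKW : (0:ℝ) ≤ 96 * (K:ℝ) * W := by positivity
    -- per-coordinate smallness of e j = L / n j
    have hesmall : ∀ j, L / (n j : ℝ) ≤ 1/256 := by
      intro j
      have h1 : 2 * L / (n j : ℝ) + (3 * L / (n j : ℝ))^2 ≤ W :=
        Finset.single_le_sum (fun i _ => hterm0 i) (Finset.mem_univ j)
      have h2 : 2 * (L / (n j : ℝ)) = 2 * L / (n j : ℝ) := by ring
      have h3 : 96 * (K:ℝ) * (2 * (L / (n j : ℝ))) ≤ 96 * (K:ℝ) * W := by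
        apply mul_le_mul_of_nonneg_left _ (by linarith)
        rw [h2]; nlinarith [sq_nonneg (3 * L / (n j : ℝ))]
      have h4 : (K:ℝ) * (L / (n j : ℝ)) ≤ 1/256 := by nlinarith
      nlinarith [mul_nonneg (show (0:ℝ) ≤ (K:ℝ) - 1 by linarith) (he0 j)]
    set E := ∑ j, L / (n j : ℝ) with hEdef
    have hE0 : (0:ℝ) ≤ E := Finset.sum_nonneg fun j _ => he0 j
    have hKE : (K:ℝ) * E ≤ 1/256 := by
      have h2E : ∑ j, 2 * (L / (n j : ℝ)) ≤ W := by
        apply Finset.sum_le_sum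
        intro j _
        have h2 : 2 * (L / (n j : ℝ)) = 2 * L / (n j : ℝ) := by ring
        rw [h2]; nlinarith [sq_nonneg (3 * L / (n j : ℝ))]
      have h2E' : 2 * E ≤ W := by rw [hEdef, ← Finset.mul_sum] at *; linarith [h2E]
      have h3 : 96 * (K:ℝ) * (2 * E) ≤ 96 * (K:ℝ) * W :=
        mul_le_mul_of_nonneg_left h2E' (by linarith)
      nlinarith
    -- per-coordinate key inequality
    have hkey : ∀ j ∈ Finset.univ,
        8*(K:ℝ)*((1/2 - p j)^2 - (1/2 - phat j)^2)
          ≤ (1/2 - phat j)^2 + (32*(K:ℝ)^2 + 33*(K:ℝ))*(L / (n j : ℝ)) := by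
      intro j _
      obtain ⟨hp0, hp1⟩ := hphat j
      have hc0 : (0:ℝ) ≤ 2 * phat j * (1 - phat j) := by nlinarith
      have hcle : 2 * phat j * (1 - phat j) ≤ 1/2 := by nlinarith [sq_nonneg (phat j - 1/2)]
      have hb : |1/2 - phat j| ≤ 1/2 := abs_le.mpr ⟨by linarith, by linarith⟩
      have hd : |phat j - p j| ≤ Real.sqrt ((2 * phat j * (1 - phat j)) * (L / (n j : ℝ)))
          + 3 * (L / (n j : ℝ)) := by
        have h := herr j
        rw [show (2 * phat j * (1 - phat j)) * (L / (n j : ℝ))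
            = 2 * phat j * (1 - phat j) * L / (n j : ℝ) by ring,
          show (3:ℝ) * (L / (n j : ℝ)) = 3 * L / (n j : ℝ) by ring]
        exact h
      have := aux9 (K:ℝ) (1/2 - phat j) (phat j - p j) (2 * phat j * (1 - phat j))
        (L / (n j : ℝ)) hKr hc0 hcle hb (he0 j) (hesmall j) hd
      nlinarith [this]
    have hsum := Finset.sum_le_sum hkey
    have e1 : ∑ j, 8*(K:ℝ)*((1/2 - p j)^2 - (1/2 - phat j)^2) = 8*(K:ℝ)*(T - S) := by
      rw [← Finset.mul_sum, Finset.sum_sub_distrib]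
    have e2 : ∑ j, ((1/2 - phat j)^2 + (32*(K:ℝ)^2 + 33*(K:ℝ))*(L / (n j : ℝ)))
        = S + (32*(K:ℝ)^2 + 33*(K:ℝ))*E := by
      rw [Finset.sum_add_distrib, ← Finset.mul_sum]
    rw [e1, e2] at hsum
    have hS4 : S ≤ (K:ℝ)/4 := by
      have h : ∀ j ∈ Finset.univ, (1/2 - phat j)^2 ≤ (1/4:ℝ) := by
        intro j _
        obtain ⟨hp0, hp1⟩ := hphat j
        nlinarith
      calc S ≤ ∑ _j : Fin K, (1/4:ℝ) := Finset.sum_le_sum h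
        _ = (K:ℝ)/4 := by
          rw [Finset.sum_const, Finset.card_univ, Fintype.card_fin, nsmul_eq_mul]; ring
    have hCE : (32*(K:ℝ)^2 + 33*(K:ℝ))*E ≤ (32*(K:ℝ) + 33)*(1/256) := by
      have := mul_le_mul_of_nonneg_left hKE (show (0:ℝ) ≤ 32*(K:ℝ) + 33 by linarith)
      nlinarith
    have hTS2 : 8*(K:ℝ)*(T - S) ≤ 129*(K:ℝ)/256 := by nlinarith
    have hfin : T - S ≤ 129/2048 := by
      by_contra hcon
      push_neg at hcon
      have h8 : (0:ℝ) < 8*(K:ℝ) := by linarith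
      have := mul_lt_mul_of_pos_left hcon h8
      nlinarith
    -- exponential comparison
    have h5 : Real.exp (129/1024 : ℝ) ≤ 1024/895 := by
      rw [show (129/1024:ℝ) = -(-(129/1024)) by ring, Real.exp_neg,
        show (1024/895:ℝ) = ((895/1024:ℝ))⁻¹ by norm_num]
      exact inv_anti₀ (by norm_num)
        (by linarith [Real.add_one_le_exp (-(129/1024):ℝ)])
    have h7 : Real.exp (2*(T - S)) ≤ 7/6 := by
      have h2 : Real.exp (2*(T - S)) ≤ Real.exp (129/1024) :=
        Real.exp_le_exp.mpr (by linarith)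
      calc Real.exp (2*(T - S)) ≤ Real.exp (129/1024) := h2
        _ ≤ 1024/895 := h5
        _ ≤ 7/6 := by norm_num
    have key : Real.exp (-2*S) ≤ 7/6 * Real.exp (-2*T) := by
      have heq : Real.exp (-2*S) = Real.exp (2*(T - S)) * Real.exp (-2*T) := by
        rw [← Real.exp_add]; ring_nf
      rw [heq]
      exact mul_le_mul_of_nonneg_right h7 (Real.exp_pos _).le
    have hexpT : (0:ℝ) ≤ Real.exp (-2*T) := (Real.exp_pos _).le
    nlinarith [key]
end

section
/- Let K ≥ 1, λ ≥ 0, L ≥ 0, ε > 0. Let p_1,…,p_K : [0,1] → [0,1] be L-Lipschitz functions, and let C ⊆ [0,1] be a finite set such that for every c* ∈ [0,1] there is c̃ ∈ C with |c̃ − c*| ≤ ε. For each j and c ∈ C suppose P_j(c) ∈ [0,1] satisfies (1/2 − P_j(c))² ≥ (1/2 − p_j(c))². Let (c_1,…,c_K) ∈ C^K minimize exp(−2 Σ_j (1/2 − P_j(c'_j))²) + λ Σ_j c'_j over (c'_1,…,c'_K) ∈ C^K. Then, with Φ(q) = exp(−2 Σ_{j=1}^K (1/2 − q_j)²) and p(c)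 = (p_1(c_1),…,p_K(c_K)), one has (7/8)·Φ(p(c)) + λ Σ_{j=1}^K c_j ≤ min over c* ∈ [0,1]^K of [ Φ(p(c*)) + λ Σ_j c*_j ] + (4L + λ)·K·ε + 48·K·Σ_{j=1}^K (P_j(c_j) − p_j(c_j))². -/
/-- Helper: difference of squared distances to 1/2 is controlled by the distance. -/
lemma sqdiff_le (x y a : ℝ) (hx0 : 0 ≤ x) (hx1 : x ≤ 1) (hy0 : 0 ≤ y) (hy1 : y ≤ 1)
    (h : |x - y| ≤ a) : (1/2 - x)^2 - (1/2 - y)^2 ≤ a := by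
  have ha : 0 ≤ a := le_trans (abs_nonneg _) h
  have h1 : x - y ≤ a := le_trans (le_abs_self _) h
  have h2 : y - x ≤ a := by have := neg_abs_le (x - y); linarith
  rcases le_or_gt (x + y) 1 with hc | hc
  · nlinarith [mul_nonneg (by linarith : (0:ℝ) ≤ a - (y - x)) (by linarith : (0:ℝ) ≤ 1 - x - y),
      mul_nonneg ha (by linarith : (0:ℝ) ≤ x + y)]
  · nlinarith [mul_nonneg (by linarith : (0:ℝ) ≤ a + (y - x)) (by linarith : (0:ℝ) ≤ x + y - 1),
      mul_nonneg ha (by linarith : (0:ℝ) ≤ 2 - x - y)]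

/-- Key inequality: (7/8) e^{-2B} ≤ e^{-2(B+s)} + 48 s². -/
lemma key_ineq (B s : ℝ) (hB : 0 ≤ B) (hs : 0 ≤ s) :
    7/8 * Real.exp (-2*B) ≤ Real.exp (-2*(B+s)) + 48*s^2 := by
  have hE0 : 0 < Real.exp (-2*B) := Real.exp_pos _
  have hE1 : Real.exp (-2*B) ≤ 1 := by
    rw [show (1:ℝ) = Real.exp 0 by simp]
    exact Real.exp_le_exp.mpr (by linarith)
  have hsplit : Real.exp (-2*(B+s)) = Real.exp (-2*B) * Real.exp (-2*s) := by
    rw [← Real.exp_add]; ring_nf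
  have hF : 1 - 2*s ≤ Real.exp (-2*s) := by
    have := Real.add_one_le_exp (-2*s); linarith
  have hEF : Real.exp (-2*B) * (1 - 2*s) ≤ Real.exp (-2*B) * Real.exp (-2*s) :=
    mul_le_mul_of_nonneg_left hF hE0.le
  rw [hsplit]
  nlinarith [sq_nonneg (48*s - Real.exp (-2*B))]

/-- Net step: e^{-2 Sb} ≤ e^{-2 S'} + 2t when Sb ≥ S' - t/2 and everything nonneg. -/
lemma exp_net (S' Sb t : ℝ) (hSb : 0 ≤ Sb) (hS' : 0 ≤ S') (ht : 0 ≤ t) (h : S' - t/2 ≤ Sb) :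
    Real.exp (-2*Sb) ≤ Real.exp (-2*S') + 2*t := by
  have hu0 : 0 < Real.exp (-2*S') := Real.exp_pos _
  rcases le_or_gt t (1/2) with hc | hc
  · have h1 : Real.exp (-2*Sb) ≤ Real.exp (-2*S' + t) := Real.exp_le_exp.mpr (by linarith)
    have h2 : Real.exp (-2*S' + t) = Real.exp (-2*S') * Real.exp t := Real.exp_add _ _
    have h4 : 1 - t ≤ Real.exp (-t) := by have := Real.add_one_le_exp (-t); linarith
    have h6 : 0 < Real.exp t := Real.exp_pos t
    have h7 : Real.exp t * (1 - t) ≤ 1 := by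
      have h5 : Real.exp t * Real.exp (-t) = 1 := by rw [← Real.exp_add]; simp
      nlinarith [mul_le_mul_of_nonneg_left h4 h6.le]
    have h3 : Real.exp t ≤ 1 + 2*t := by
      nlinarith [mul_nonneg ht (by linarith : (0:ℝ) ≤ 1 - 2*t)]
    have hu1 : Real.exp (-2*S') ≤ 1 := by
      rw [show (1:ℝ) = Real.exp 0 by simp]
      exact Real.exp_le_exp.mpr (by linarith)
    calc Real.exp (-2*Sb) ≤ Real.exp (-2*S') * Real.exp t := by rw [← h2]; exact h1
      _ ≤ Real.exp (-2*S') + 2*t := by nlinarith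
  · have h1 : Real.exp (-2*Sb) ≤ 1 := by
      rw [show (1:ℝ) = Real.exp 0 by simp]
      exact Real.exp_le_exp.mpr (by linarith)
    linarith

set_option maxHeartbeats 1000000 in
/-- Let `K ≥ 1`, `λ ≥ 0`, `L ≥ 0`, `ε > 0`. Let
`p_1,…,p_K : [0,1] → [0,1]` be `L`-Lipschitz, and let `C ⊆ [0,1]` be a finite set
such that every `c* ∈ [0,1]` has `c̃ ∈ C` with `|c̃ − c*| ≤ ε`. Suppose each
`P_j(c) ∈ [0,1]` satisfies `(1/2 − P_j(c))² ≥ (1/2 − p_j(c))²` (optimism), and let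
`(c_1,…,c_K) ∈ C^K` minimize `exp(−2∑_j (1/2 − P_j(c'_j))²) + λ∑_j c'_j` over `C^K`.
Then, with `Φ(q) = exp(−2∑_j (1/2 − q_j)²)`, for every `c* ∈ [0,1]^K`:
`(7/8)Φ(p(c)) + λ∑_j c_j ≤ Φ(p(c*)) + λ∑_j c*_j + (4L+λ)Kε + 48K∑_j (P_j(c_j) − p_j(c_j))²`. -/
theorem stmt10 (K : ℕ) (hK : 1 ≤ K) (lam L ε : ℝ)
    (hlam : 0 ≤ lam) (hL : 0 ≤ L) (hε : 0 < ε)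
    (p : Fin K → ℝ → ℝ)
    (hprange : ∀ j, ∀ c ∈ Set.Icc (0:ℝ) 1, p j c ∈ Set.Icc (0:ℝ) 1)
    (hpLip : ∀ j, ∀ c ∈ Set.Icc (0:ℝ) 1, ∀ c' ∈ Set.Icc (0:ℝ) 1,
      |p j c - p j c'| ≤ L * |c - c'|)
    (C : Finset ℝ) (hC : (C : Set ℝ) ⊆ Set.Icc (0:ℝ) 1)
    (hnet : ∀ c ∈ Set.Icc (0:ℝ) 1, ∃ c' ∈ C, |c' - c| ≤ ε)
    (P : Fin K → ℝ → ℝ)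
    (hPrange : ∀ j, ∀ c ∈ C, P j c ∈ Set.Icc (0:ℝ) 1)
    (hPopt : ∀ j, ∀ c ∈ C, (1/2 - p j c)^2 ≤ (1/2 - P j c)^2)
    (c : Fin K → ℝ) (hc : ∀ j, c j ∈ C)
    (hmin : ∀ b : Fin K → ℝ, (∀ j, b j ∈ C) →
      Real.exp (-2 * ∑ j, (1/2 - P j (c j))^2) + lam * ∑ j, c j
        ≤ Real.exp (-2 * ∑ j, (1/2 - P j (b j))^2) + lam * ∑ j, b j) :
    ∀ cstar : Fin K → ℝ, (∀ j, cstar j ∈ Set.Icc (0:ℝ) 1) →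
      (7/8) * Real.exp (-2 * ∑ j, (1/2 - p j (c j))^2) + lam * ∑ j, c j
        ≤ (Real.exp (-2 * ∑ j, (1/2 - p j (cstar j))^2) + lam * ∑ j, cstar j)
          + (4*L + lam) * K * ε
          + 48 * K * ∑ j, (P j (c j) - p j (c j))^2 := by
  intro cstar hcstar
  choose b hbC hbε using fun j => hnet (cstar j) (hcstar j)
  -- notation
  set A := ∑ j, (1/2 - P j (c j))^2 with hA
  set B := ∑ j, (1/2 - p j (c j))^2 with hB
  set D := ∑ j, (P j (c j) - p j (c j))^2 with hD
  set SPb := ∑ j, (1/2 - P j (b j))^2 with hSPb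
  set Spb := ∑ j, (1/2 - p j (b j))^2 with hSpb
  set Sstar := ∑ j, (1/2 - p j (cstar j))^2 with hSstar
  have hB0 : 0 ≤ B := Finset.sum_nonneg fun j _ => sq_nonneg _
  have hSstar0 : 0 ≤ Sstar := Finset.sum_nonneg fun j _ => sq_nonneg _
  have hSpb0 : 0 ≤ Spb := Finset.sum_nonneg fun j _ => sq_nonneg _
  have hD0 : 0 ≤ D := Finset.sum_nonneg fun j _ => sq_nonneg _
  have hBA : B ≤ A := Finset.sum_le_sum fun j _ => hPopt j _ (hc j)
  -- (A - B)^2 ≤ K * D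
  have hABdiff : A - B = ∑ j, ((1/2 - P j (c j))^2 - (1/2 - p j (c j))^2) := by
    rw [hA, hB, ← Finset.sum_sub_distrib]
  have hterm : A - B ≤ ∑ j, |P j (c j) - p j (c j)| := by
    rw [hABdiff]
    refine Finset.sum_le_sum fun j _ => ?_
    obtain ⟨hP0, hP1⟩ := hPrange j _ (hc j)
    obtain ⟨hp0, hp1⟩ := hprange j _ (hC (hc j))
    exact sqdiff_le _ _ _ hP0 hP1 hp0 hp1 le_rfl
  have habs0 : 0 ≤ ∑ j, |P j (c j) - p j (c j)| :=
    Finset.sum_nonneg fun j _ => abs_nonneg _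
  have hCS : (∑ j, |P j (c j) - p j (c j)|)^2 ≤ K * D := by
    have := sq_sum_le_card_mul_sum_sq (s := Finset.univ)
      (f := fun j => |P j (c j) - p j (c j)|)
    simpa [sq_abs, hD] using this
  have hABsq : (A - B)^2 ≤ K * D := by
    refine le_trans ?_ hCS
    exact pow_le_pow_left₀ (by linarith) hterm 2
  -- key inequality
  have hkey : 7/8 * Real.exp (-2*B) ≤ Real.exp (-2*A) + 48*(K*D) := by
    have := key_ineq B (A - B) hB0 (by linarith)
    have hAB' : B + (A - B) = A := by ring
    rw [hAB'] at this
    nlinarith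
  -- minimality with b
  have hmin' := hmin b hbC
  -- optimism at b
  have hPb : Real.exp (-2*SPb) ≤ Real.exp (-2*Spb) := by
    refine Real.exp_le_exp.mpr ?_
    have : Spb ≤ SPb := Finset.sum_le_sum fun j _ => hPopt j _ (hbC j)
    linarith
  -- Lipschitz / net
  have hlipsum : Sstar - K*(L*ε) ≤ Spb := by
    have h1 : ∀ j ∈ Finset.univ, (1/2 - p j (cstar j))^2 - L*ε ≤ (1/2 - p j (b j))^2 := by
      intro j _
      obtain ⟨hx0, hx1⟩ := hprange j _ (hcstar j)
      obtain ⟨hy0, hy1⟩ := hprange j _ (hC (hbC j))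
      have hlp := hpLip j (cstar j) (hcstar j) (b j) (hC (hbC j))
      have habs : |cstar j - b j| ≤ ε := by rw [abs_sub_comm]; exact hbε j
      have : |p j (cstar j) - p j (b j)| ≤ L * ε :=
        le_trans hlp (mul_le_mul_of_nonneg_left habs hL)
      have := sqdiff_le _ _ _ hx0 hx1 hy0 hy1 this
      linarith
    have := Finset.sum_le_sum h1
    simp only [Finset.sum_sub_distrib, Finset.sum_const, Finset.card_univ,
      Fintype.card_fin, nsmul_eq_mul] at this
    rw [hSstar, hSpb]
    linarith
  have hnetexp : Real.exp (-2*Spb) ≤ Real.exp (-2*Sstar) + 2*(2*K*(L*ε)) := by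
    refine exp_net Sstar Spb (2*K*(L*ε)) hSpb0 hSstar0 ?_ ?_
    · positivity
    · linarith
  -- payment bound
  have hpay : lam * ∑ j, b j ≤ lam * ∑ j, cstar j + lam * K * ε := by
    have h1 : ∑ j, b j ≤ ∑ j, (cstar j + ε) := by
      refine Finset.sum_le_sum fun j _ => ?_
      have := le_trans (le_abs_self _) (hbε j)
      linarith
    have h2 : ∑ j, (cstar j + ε) = (∑ j, cstar j) + K * ε := by
      rw [Finset.sum_add_distrib]
      simp [Finset.card_univ, mul_comm]
    have h3 : lam * ∑ j, b j ≤ lam * ((∑ j, cstar j) + K * ε) :=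
      mul_le_mul_of_nonneg_left (by linarith) hlam
    nlinarith
  -- assemble
  have hchain : Real.exp (-2*A) + lam * ∑ j, c j ≤ Real.exp (-2*SPb) + lam * ∑ j, b j := by
    simpa only [← hA, ← hSPb] using hmin'
  have hgoal : 7/8 * Real.exp (-2*B) + lam * ∑ j, c j
      ≤ (Real.exp (-2*Sstar) + lam * ∑ j, cstar j) + (4*L + lam) * K * ε + 48 * K * D := by
    have e1 : (4*L + lam) * K * ε = 2*(2*K*(L*ε)) + lam * K * ε := by ring
    rw [e1]
    linarith [hkey, hchain, hPb, hnetexp, hpay]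
  exact hgoal
end

section
/- Let X_1,…,X_t be i.i.d. random variables taking values in [0,1] with mean μ. Let X̄_t = (1/t)Σ_{s=1}^t X_s and V_t = (1/t)Σ_{s=1}^t (X_s − X̄_t)². Then for any δ ∈ (0,1), with probability at least 1 − δ, |X̄_t − μ| ≤ √( (2·V_t·ln(3/δ))/t ) + 3·ln(3/δ)/t. -/
/-!
Three applications of Bernstein's inequality, each with failure probability `δ / 3`, do the work.
Put `L = log (3 / δ)` and `α = √(2 L / t)`; let `v` be the average of the variances of the `X s`,
`V` the empirical variance, and `b = max m (1 - m)`, so that `|X s - m| ≤ b` and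
`v ≤ m (1 - m) = b (1 - b)` (Bhatia–Davis). Bernstein applied to `±(X s - m)` gives
`|X̄ - m| ≤ α √v + α² / 6`. Applied to `Var (X s) - (X s - m)²`, which is bounded by `b²` and has
variance at most `b² Var (X s)`, it gives `v ≤ V + (X̄ - m)² + α b √v + α² b² / 6`, because
`∑ (X s - m)² = t V + t (X̄ - m)²`. Eliminating `√v` between these two inequalities is elementary
algebra and yields `|X̄ - m| ≤ α √V + 3 α² / 2`, which is the claim.

Bernstein's inequality itself is the Chernoff bound combined with
`E exp (l Y) ≤ exp (E Y² (exp (l c) - l c - 1) / c²)` for centred `|Y| ≤ c`; this follows from the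
monotonicity of `(exp u - u - 1) / u²`.
-/

open Real MeasureTheory ProbabilityTheory

lemma le_of_hasDerivAt_nonneg_of_le {f f' : ℝ → ℝ} {a x : ℝ}
    (hf : ∀ y, HasDerivAt f (f' y) y) (hf' : ∀ y, a ≤ y → 0 ≤ f' y) (hx : a ≤ x) :
    f a ≤ f x := by
  refine monotoneOn_of_hasDerivWithinAt_nonneg (convex_Ici a)
    (fun y _ ↦ (hf y).continuousAt.continuousWithinAt) (fun y _ ↦ (hf y).hasDerivWithinAt)
    (fun y hy ↦ hf' y ?_) Set.self_mem_Ici hx hx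
  rw [interior_Ici] at hy
  exact hy.le

namespace Real

lemma exp_le_one_add_add_sq_div_two_of_nonpos {u : ℝ} (hu : u ≤ 0) :
    exp u ≤ 1 + u + u ^ 2 / 2 := by
  have hg : ∀ y, HasDerivAt (fun y ↦ 1 + y + y ^ 2 / 2 - exp y) (1 + y - exp y) y := fun y ↦
    ((((hasDerivAt_id' y).const_add 1).add ((hasDerivAt_pow 2 y).div_const 2)).sub
      (hasDerivAt_exp y)).congr_deriv (by ring)
  have := antitone_of_hasDerivAt_nonpos hg (fun y ↦ by
    simp only [Pi.zero_apply]
    linarith [add_one_le_exp y]) hu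
  simp only [exp_zero] at this
  linarith

lemma sub_one_mul_exp_add_one_nonneg (u : ℝ) : 0 ≤ (u - 1) * exp u + 1 := by
  have h := mul_le_mul_of_nonneg_right (add_one_le_exp (-u)) (exp_pos u).le
  rw [← exp_add, neg_add_cancel, exp_zero] at h
  linarith

lemma two_mul_exp_sub_sub_one_le {u : ℝ} (hu : 0 ≤ u) :
    2 * (exp u - u - 1) ≤ u * (exp u - 1) := by
  have hg : ∀ y, HasDerivAt (fun y ↦ (y - 2) * exp y + y) ((y - 1) * exp y + 1) y := fun y ↦
    ((((hasDerivAt_id' y).sub_const 2).mul (hasDerivAt_exp y)).add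
      (hasDerivAt_id' y)).congr_deriv (by ring)
  have := monotone_of_hasDerivAt_nonneg hg sub_one_mul_exp_add_one_nonneg hu
  simp only [exp_zero] at this
  linarith

lemma mul_exp_sub_one_le_mul_exp_sub_one {u z : ℝ} (hu : 0 ≤ u) (huz : u ≤ z) :
    z * (exp u - 1) ≤ u * (exp z - 1) := by
  rcases hu.eq_or_lt with rfl | hu
  · simp
  have hz := hu.trans_le huz
  have h := convexOn_exp.secant_mono (a := 0) (Set.mem_univ 0) (Set.mem_univ u)
    (Set.mem_univ z) hu.ne' hz.ne' huz
  simp only [exp_zero, sub_zero] at h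
  rwa [div_le_div_iff₀ hu hz, mul_comm, mul_comm (exp z - 1)] at h

/-- Monotonicity of `u ↦ (exp u - u - 1) / u ^ 2`, cleared of denominators. -/
lemma sq_mul_exp_sub_sub_one_le {u z : ℝ} (huz : |u| ≤ z) :
    z ^ 2 * (exp u - u - 1) ≤ u ^ 2 * (exp z - z - 1) := by
  have hz : 0 ≤ z := (abs_nonneg u).trans huz
  rcases le_or_gt u 0 with hu | hu
  · have h1 := exp_le_one_add_add_sq_div_two_of_nonpos hu
    have h2 := quadratic_le_exp_of_nonneg hz
    have h3 : 0 ≤ exp u - u - 1 := by linarith [add_one_le_exp u]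
    have h4 : z ^ 2 * (exp u - u - 1) ≤ u ^ 2 * (z ^ 2 / 2) := by
      have : u ^ 2 ≤ z ^ 2 := sq_le_sq' (abs_le.1 huz).1 (le_of_abs_le huz)
      nlinarith
    nlinarith [sq_nonneg u]
  · have hF : ∀ x, HasDerivAt (fun x ↦ u ^ 2 * (exp x - x - 1) - x ^ 2 * (exp u - u - 1))
        (u ^ 2 * (exp x - 1) - 2 * x * (exp u - u - 1)) x := fun x ↦
      (((((hasDerivAt_exp x).sub (hasDerivAt_id' x)).sub_const 1).const_mul (u ^ 2)).sub
        ((hasDerivAt_pow 2 x).mul_const (exp u - u - 1))).congr_deriv (by simp)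
    have hF' : ∀ x, u ≤ x → 0 ≤ u ^ 2 * (exp x - 1) - 2 * x * (exp u - u - 1) := fun x hx ↦ by
      -- `u ^ 2 (exp x - 1) ≥ u x (exp u - 1) ≥ 2 x (exp u - u - 1)`
      nlinarith [mul_le_mul_of_nonneg_left (mul_exp_sub_one_le_mul_exp_sub_one hu.le hx) hu.le,
        mul_le_mul_of_nonneg_left (two_mul_exp_sub_sub_one_le hu.le) (hu.le.trans hx)]
    simpa using le_of_hasDerivAt_nonneg_of_le hF hF' ((le_abs_self u).trans huz)

lemma exp_sub_sub_one_mul_le_sq {x : ℝ} (hx : 0 ≤ x) :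
    (2 - 2 * x / 3) * (exp x - x - 1) ≤ x ^ 2 := by
  have hF' : ∀ y, HasDerivAt
      (fun y ↦ 2 * y + 2 / 3 * (exp y - y - 1) - (2 - 2 * y / 3) * (exp y - 1))
      (2 / 3 * ((y - 1) * exp y + 1)) y := fun y ↦
    ((((hasDerivAt_id' y).const_mul 2).add
      ((((hasDerivAt_exp y).sub (hasDerivAt_id' y)).sub_const 1).const_mul (2 / 3))).sub
      ((((hasDerivAt_id' y).const_mul 2).div_const 3).const_sub 2 |>.mul
        ((hasDerivAt_exp y).sub_const 1))).congr_deriv (by ring)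
  have hF : ∀ y, HasDerivAt (fun y ↦ y ^ 2 - (2 - 2 * y / 3) * (exp y - y - 1))
      (2 * y + 2 / 3 * (exp y - y - 1) - (2 - 2 * y / 3) * (exp y - 1)) y := fun y ↦
    ((hasDerivAt_pow 2 y).sub ((((hasDerivAt_id' y).const_mul 2).div_const 3).const_sub 2 |>.mul
      (((hasDerivAt_exp y).sub (hasDerivAt_id' y)).sub_const 1))).congr_deriv
      (by simp only [Pi.sub_apply, Nat.cast_ofNat]; ring)
  have hF'_mono := monotone_of_hasDerivAt_nonneg hF' fun y ↦
    mul_nonneg (by norm_num) (sub_one_mul_exp_add_one_nonneg y)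
  have := le_of_hasDerivAt_nonneg_of_le hF (fun y hy ↦ by simpa using hF'_mono hy) hx
  simp only [exp_zero] at this
  linarith

lemma exp_mul_le_of_abs_le {y c l : ℝ} (hc : 0 < c) (hl : 0 ≤ l) (hy : |y| ≤ c) :
    exp (l * y) ≤ 1 + l * y + y ^ 2 * ((exp (l * c) - l * c - 1) / c ^ 2) := by
  rcases hl.eq_or_lt with rfl | hl
  · simp
  have h := sq_mul_exp_sub_sub_one_le (u := l * y) (z := l * c)
    (by rw [abs_mul, abs_of_pos hl]; gcongr)
  rw [mul_pow, mul_pow, mul_assoc, mul_assoc] at h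
  have h' := le_of_mul_le_mul_left h (by positivity)
  rw [← mul_div_assoc, ← sub_le_iff_le_add', le_div_iff₀ (by positivity)]
  linarith

end Real

lemma bernstein_exponent_le {p q c l : ℝ} (hp : 0 ≤ p) (hq : 0 < q) (hc : 0 < c)
    (hl : l * (p + c * q / 3) = q) :
    p ^ 2 * ((exp (l * c) - l * c - 1) / c ^ 2) + q ^ 2 / 2 ≤ l * (p * q + c * q ^ 2 / 6) := by
  have hl0 : 0 < l := by
    by_contra! h
    nlinarith [mul_nonpos_of_nonpos_of_nonneg h (by positivity : 0 ≤ p + c * q / 3)]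
  set E := exp (l * c) - l * c - 1
  -- `hl` says `q (2 - 2 l c / 3) = 2 l p`, which turns `hsub` into `2 p E ≤ q l c ^ 2`
  have hsub := exp_sub_sub_one_mul_le_sq (x := l * c) (by positivity)
  have h2pE : 2 * p * E ≤ q * l * c ^ 2 := by
    have : q * ((2 - 2 * (l * c) / 3) * E) ≤ q * (l * c) ^ 2 := by gcongr
    have h' : l * (2 * p * E) ≤ l * (q * l * c ^ 2) := by linear_combination this + 2 * E * hl
    exact le_of_mul_le_mul_left h' hl0
  have : p ^ 2 * (E / c ^ 2) ≤ p * q * l / 2 := by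
    rw [mul_div_assoc', div_le_iff₀ (by positivity)]
    nlinarith [mul_le_mul_of_nonneg_left h2pE hp]
  linear_combination this - q / 2 * hl

lemma max_mul_one_sub_max (m : ℝ) : max m (1 - m) * (1 - max m (1 - m)) = m * (1 - m) := by
  rcases max_cases m (1 - m) with ⟨h, _⟩ | ⟨h, _⟩
  · rw [h]
  · rw [h]
    ring

lemma le_of_empirical_bernstein_bounds {α s d w b : ℝ} (hα : 0 ≤ α) (hw : 0 ≤ w)
    (hb : 1 / 2 ≤ b) (hb1 : b ≤ 1) (hsb : s ^ 2 ≤ b * (1 - b)) (hd : d ≤ α * s + α ^ 2 / 6)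
    (hsw : s ^ 2 ≤ w ^ 2 + d ^ 2 + α * b * s + α ^ 2 * b ^ 2 / 6) :
    d ≤ α * w + 3 * α ^ 2 / 2 := by
  have hs2 : s ≤ 1 / 2 := by nlinarith [sq_nonneg (2 * s - 1)]
  rcases le_or_gt 1 α with hα1 | hα1
  · nlinarith [mul_nonneg hα hw]
  -- Otherwise `hd` forces `s > w + 4 α / 3`; squaring this against `hsw` and `hd ^ 2` leaves a
  -- quadratic inequality in `b` that fails for `α < 1`.
  by_contra! hcon
  have hα0 : 0 < α := by
    rcases hα.eq_or_lt with rfl | h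
    · nlinarith
    · exact h
  have hws : w + 4 / 3 * α < s := by nlinarith
  have hd0 : 0 ≤ d := by nlinarith [mul_nonneg hα hw]
  have hd2 : d ^ 2 ≤ α ^ 2 * (b * (1 - b)) + α ^ 3 / 6 + α ^ 4 / 36 := by
    have : d ^ 2 ≤ (α * s + α ^ 2 / 6) ^ 2 := pow_le_pow_left₀ hd0 hd 2
    nlinarith [mul_le_mul_of_nonneg_left hsb (sq_nonneg α),
      mul_le_mul_of_nonneg_left hs2 (pow_nonneg hα 3)]
  have hsq : (w + α * (4 / 3 - b / 2)) ^ 2 < (s - α * b / 2) ^ 2 :=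
    pow_lt_pow_left₀ (by nlinarith) (by nlinarith) two_ne_zero
  have : α ^ 2 * (16 / 9 - 7 * b / 3 + 5 * b ^ 2 / 6) < α ^ 2 * (α / 6 + α ^ 2 / 36) := by
    nlinarith [mul_nonneg hw hα]
  have := lt_of_mul_lt_mul_left this (sq_nonneg α)
  nlinarith

open Finset in
lemma Finset.sum_sub_sq_eq_sum_sub_mean_sq_add {ι : Type*} (s : Finset ι) (x : ι → ℝ) (m : ℝ) :
    ∑ i ∈ s, (x i - m) ^ 2 = ∑ i ∈ s, (x i - (1 / #s) * ∑ j ∈ s, x j) ^ 2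
      + #s * ((1 / #s) * ∑ j ∈ s, x j - m) ^ 2 := by
  set a := (1 / (#s : ℝ)) * ∑ j ∈ s, x j
  have hsum : ∑ i ∈ s, (x i - a) = 0 := by
    rcases s.eq_empty_or_nonempty with rfl | hs
    · simp
    rw [sum_sub_distrib, sum_const, nsmul_eq_mul, ← mul_assoc,
      mul_one_div_cancel (by exact_mod_cast hs.card_pos.ne'), one_mul, sub_self]
  calc ∑ i ∈ s, (x i - m) ^ 2
      = ∑ i ∈ s, ((x i - a) ^ 2 + 2 * (a - m) * (x i - a) + (a - m) ^ 2) :=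
        sum_congr rfl fun i _ ↦ by ring
    _ = _ := by
      rw [sum_add_distrib, sum_add_distrib, ← mul_sum, hsum, sum_const, nsmul_eq_mul]
      ring

lemma abs_mean_sub_le_of_bernstein_bounds {t : ℕ} (ht : 0 < t) (x : Fin t → ℝ) {m σ2 b L : ℝ}
    (hL : 0 ≤ L) (hσ : 0 ≤ σ2) (hb : 1 / 2 ≤ b) (hb1 : b ≤ 1) (hσb : σ2 ≤ t * (b * (1 - b)))
    (hmean : |∑ i, (x i - m)| ≤ √(2 * σ2 * L) + L / 3)
    (hsq : σ2 - ∑ i, (x i - m) ^ 2 ≤ √(2 * (b ^ 2 * σ2) * L) + b ^ 2 * L / 3) :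
    |(1 / t) * ∑ s, x s - m| ≤
      √(2 * ((1 / t) * ∑ s, (x s - (1 / t) * ∑ r, x r) ^ 2) * L / t) + 3 * L / t := by
  have ht' : (0 : ℝ) < t := by exact_mod_cast ht
  set d := (1 / t : ℝ) * ∑ s, x s - m
  set V := (1 / t : ℝ) * ∑ s, (x s - (1 / t) * ∑ r, x r) ^ 2
  have hV : 0 ≤ V := by positivity
  set α := √(2 * L / t)
  set s := √(σ2 / t)
  set w := √V
  have hα2 : α ^ 2 = 2 * L / t := sq_sqrt (by positivity)
  have hs2 : s ^ 2 = σ2 / t := sq_sqrt (by positivity)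
  have hw2 : w ^ 2 = V := sq_sqrt hV
  have hLα : L = t * α ^ 2 / 2 := by rw [hα2]; field_simp
  have hσs : σ2 = t * s ^ 2 := by rw [hs2]; field_simp
  have e1 : √(2 * σ2 * L) = t * (α * s) :=
    (sqrt_eq_iff_eq_sq (by positivity) (by positivity)).2 (by rw [hLα, hσs]; ring)
  have e2 : √(2 * (b ^ 2 * σ2) * L) = t * (α * b * s) :=
    (sqrt_eq_iff_eq_sq (by positivity) (by positivity)).2 (by rw [hLα, hσs]; ring)
  have e3 : √(2 * V * L / t) = α * w :=
    (sqrt_eq_iff_eq_sq (by positivity) (by positivity)).2 (by rw [mul_pow, hα2, hw2]; ring)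
  have hsum1 : ∑ i, (x i - m) = t * d := by
    rw [Finset.sum_sub_distrib]
    simp only [d, Finset.sum_const, Finset.card_univ, Fintype.card_fin, nsmul_eq_mul]
    field_simp
  have hsum2 : ∑ i, (x i - m) ^ 2 = t * V + t * d ^ 2 := by
    rw [Finset.sum_sub_sq_eq_sum_sub_mean_sq_add]
    simp only [V, d, Finset.card_univ, Fintype.card_fin]
    rw [← mul_assoc, mul_one_div_cancel ht'.ne', one_mul]
  rw [e3, show 3 * L / t = 3 * α ^ 2 / 2 by rw [hLα]; field_simp]
  refine le_of_empirical_bernstein_bounds (s := s) (sqrt_nonneg _) (sqrt_nonneg _) hb hb1 ?_ ?_ ?_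
  · rw [hs2, div_le_iff₀ ht']
    linarith
  · rw [e1, hsum1, abs_mul, abs_of_pos ht', hLα] at hmean
    nlinarith
  · rw [e2, hsum2, hLα, hσs] at hsq
    rw [sq_abs, hw2]
    nlinarith

section Probability

variable {Ω : Type*} [MeasurableSpace Ω] {μ : Measure Ω} [IsProbabilityMeasure μ]

lemma mgf_le_exp_of_abs_le {Y : Ω → ℝ} (hY : Measurable Y) {c l : ℝ} (hc : 0 < c) (hl : 0 ≤ l)
    (hb : ∀ ω, |Y ω| ≤ c) (h0 : ∫ ω, Y ω ∂μ = 0) :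
    mgf Y μ l ≤ exp ((∫ ω, Y ω ^ 2 ∂μ) * ((exp (l * c) - l * c - 1) / c ^ 2)) := by
  set K := (exp (l * c) - l * c - 1) / c ^ 2
  have hY2 : MemLp Y 2 μ := memLp_of_bounded (.of_forall fun ω ↦ abs_le.1 (hb ω))
    hY.aestronglyMeasurable 2
  have hYint : Integrable Y μ := hY2.integrable one_le_two
  have hlin : Integrable (fun ω ↦ 1 + l * Y ω) μ := (integrable_const 1).add (hYint.const_mul l)
  calc mgf Y μ l
      ≤ ∫ ω, (1 + l * Y ω + Y ω ^ 2 * K) ∂μ :=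
        integral_mono (integrable_exp_mul_of_le l c hl hY.aemeasurable
          (.of_forall fun ω ↦ le_of_abs_le (hb ω))) (hlin.add (hY2.integrable_sq.mul_const K))
          fun ω ↦ exp_mul_le_of_abs_le hc hl (hb ω)
    _ = 1 + (∫ ω, Y ω ^ 2 ∂μ) * K := by
        rw [integral_add hlin (hY2.integrable_sq.mul_const K),
          integral_add (integrable_const 1) (hYint.const_mul l), integral_const_mul,
          integral_mul_const, h0]
        simp
    _ ≤ exp ((∫ ω, Y ω ^ 2 ∂μ) * K) := by linarith [add_one_le_exp ((∫ ω, Y ω ^ 2 ∂μ) * K)]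

/-- **Bernstein's inequality**. -/
theorem measureReal_sum_ge_le_of_abs_le {ι : Type*} [Fintype ι] {Y : ι → Ω → ℝ}
    (hY : ∀ i, Measurable (Y i)) (hindep : iIndepFun Y μ) {c σ2 L : ℝ} (hc : 0 < c)
    (hL : 0 < L) (hb : ∀ i ω, |Y i ω| ≤ c) (h0 : ∀ i, ∫ ω, Y i ω ∂μ = 0)
    (hvar : ∑ i, ∫ ω, Y i ω ^ 2 ∂μ ≤ σ2) :
    μ.real {ω | √(2 * σ2 * L) + c * L / 3 ≤ ∑ i, Y i ω} ≤ exp (-L) := by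
  have hσ : 0 ≤ σ2 :=
    (Finset.sum_nonneg fun i _ ↦ integral_nonneg fun ω ↦ sq_nonneg _).trans hvar
  set p := √σ2
  set q := √(2 * L)
  have hq : 0 < q := sqrt_pos.2 (by positivity)
  have hε : √(2 * σ2 * L) + c * L / 3 = p * q + c * q ^ 2 / 6 := by
    rw [sq_sqrt (by positivity), mul_comm 2 σ2, mul_assoc, sqrt_mul hσ]
    ring
  set l := q / (p + c * q / 3)
  have hl : l * (p + c * q / 3) = q := div_mul_cancel₀ _ (by positivity)
  have hl0 : 0 ≤ l := by positivity
  set K := (exp (l * c) - l * c - 1) / c ^ 2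
  have hK : 0 ≤ K := div_nonneg (by linarith [add_one_le_exp (l * c)]) (by positivity)
  have hmgf : mgf (fun ω ↦ ∑ i, Y i ω) μ l ≤ exp (σ2 * K) := calc
    mgf (fun ω ↦ ∑ i, Y i ω) μ l = ∏ i, mgf (Y i) μ l := by
      rw [← hindep.mgf_sum hY]
      congr with ω
      simp [Finset.sum_apply]
    _ ≤ ∏ i, exp ((∫ ω, Y i ω ^ 2 ∂μ) * K) := Finset.prod_le_prod (fun i _ ↦ mgf_nonneg)
        fun i _ ↦ mgf_le_exp_of_abs_le (hY i) hc hl0 (hb i) (h0 i)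
    _ ≤ exp (σ2 * K) := by
      rw [← exp_sum, ← Finset.sum_mul]
      exact exp_le_exp.2 (mul_le_mul_of_nonneg_right hvar hK)
  have hint : Integrable (fun ω ↦ exp (l * ∑ i, Y i ω)) μ :=
    integrable_exp_mul_of_le l (∑ _i : ι, c) hl0 (by fun_prop)
      (.of_forall fun ω ↦ Finset.sum_le_sum fun i _ ↦ le_of_abs_le (hb i ω))
  calc μ.real {ω | √(2 * σ2 * L) + c * L / 3 ≤ ∑ i, Y i ω}
      ≤ exp (-l * (p * q + c * q ^ 2 / 6)) * mgf (fun ω ↦ ∑ i, Y i ω) μ l := by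
        rw [← hε]
        exact measure_ge_le_exp_mul_mgf _ hl0 hint
    _ ≤ exp (-l * (p * q + c * q ^ 2 / 6)) * exp (σ2 * K) := by gcongr
    _ ≤ exp (-L) := by
      rw [← exp_add, exp_le_exp]
      have h : p ^ 2 * K + q ^ 2 / 2 ≤ l * (p * q + c * q ^ 2 / 6) :=
        bernstein_exponent_le (sqrt_nonneg σ2) hq hc hl
      rw [sq_sqrt hσ] at h
      linarith [sq_sqrt (by positivity : 0 ≤ 2 * L)]

theorem measureReal_abs_sum_ge_le_of_abs_le {ι : Type*} [Fintype ι] {Y : ι → Ω → ℝ}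
    (hY : ∀ i, Measurable (Y i)) (hindep : iIndepFun Y μ) {c σ2 L : ℝ} (hc : 0 < c)
    (hL : 0 < L) (hb : ∀ i ω, |Y i ω| ≤ c) (h0 : ∀ i, ∫ ω, Y i ω ∂μ = 0)
    (hvar : ∑ i, ∫ ω, Y i ω ^ 2 ∂μ ≤ σ2) :
    μ.real {ω | √(2 * σ2 * L) + c * L / 3 ≤ |∑ i, Y i ω|} ≤ 2 * exp (-L) := by
  set ε := √(2 * σ2 * L) + c * L / 3
  have hneg : μ.real {ω | ε ≤ ∑ i, -Y i ω} ≤ exp (-L) :=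
    measureReal_sum_ge_le_of_abs_le (fun i ↦ (hY i).neg)
      (hindep.comp (fun _ ↦ Neg.neg) fun _ ↦ measurable_neg) hc hL
      (fun i ω ↦ by simpa using hb i ω) (fun i ↦ by simp [integral_neg, h0 i])
      (by simpa using hvar)
  calc μ.real {ω | ε ≤ |∑ i, Y i ω|}
      ≤ μ.real ({ω | ε ≤ ∑ i, Y i ω} ∪ {ω | ε ≤ ∑ i, -Y i ω}) := by
        refine measureReal_mono (fun ω hω ↦ ?_) (measure_ne_top _ _)
        simpa [Finset.sum_neg_distrib, le_abs] using hω
    _ ≤ 2 * exp (-L) := by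
        linarith [measureReal_union_le (μ := μ) {ω | ε ≤ ∑ i, Y i ω} {ω | ε ≤ ∑ i, -Y i ω},
          measureReal_sum_ge_le_of_abs_le hY hindep hc hL hb h0 hvar]

lemma ofReal_one_sub_le_measure_of_compl_subset {s u : Set Ω} {δ : ℝ} (hus : uᶜ ⊆ s)
    (hu : μ.real u ≤ δ) : ENNReal.ofReal (1 - δ) ≤ μ s := by
  have h : 1 ≤ μ u + μ s := by
    simpa using (measure_univ_le_add_compl (μ := μ) u).trans
      (add_le_add le_rfl (measure_mono hus))
  calc ENNReal.ofReal (1 - δ)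
      ≤ ENNReal.ofReal (1 - μ.real u) := ENNReal.ofReal_le_ofReal (by linarith)
    _ = 1 - μ u := by
        rw [ENNReal.ofReal_sub _ measureReal_nonneg, ENNReal.ofReal_one, ofReal_measureReal]
    _ ≤ μ s := tsub_le_iff_left.2 h

lemma integral_mem_Icc_of_forall_mem_Icc {Z : Ω → ℝ} (hZ : Measurable Z) {a b : ℝ}
    (h : ∀ ω, Z ω ∈ Set.Icc a b) : μ[Z] ∈ Set.Icc a b :=
  (convex_Icc a b).integral_mem isClosed_Icc (.of_forall h)
    (.of_mem_Icc a b hZ.aemeasurable (.of_forall h))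

lemma variance_le_mul_integral_of_mem_Icc {Z : Ω → ℝ} (hZ : AEMeasurable Z μ) {B : ℝ}
    (h : ∀ᵐ ω ∂μ, Z ω ∈ Set.Icc 0 B) : Var[Z; μ] ≤ B * μ[Z] :=
  (variance_le_sub_mul_sub h hZ).trans (by nlinarith [sq_nonneg μ[Z]])

variable {ι : Type*} [Fintype ι] {X : ι → Ω → ℝ} {m : ℝ}

lemma sum_variance_le (hX : ∀ i, Measurable (X i)) (hval : ∀ i ω, X i ω ∈ Set.Icc (0 : ℝ) 1)
    (hmean : ∀ i, ∫ ω, X i ω ∂μ = m) :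
    ∑ i, Var[X i; μ] ≤ Fintype.card ι * (m * (1 - m)) := by
  calc ∑ i, Var[X i; μ] ≤ ∑ _i : ι, m * (1 - m) := Finset.sum_le_sum fun i _ ↦ by
        have := variance_le_sub_mul_sub (μ := μ) (.of_forall (hval i)) (hX i).aemeasurable
        rw [hmean i] at this
        linarith
    _ = Fintype.card ι * (m * (1 - m)) := by simp

lemma measureReal_abs_sum_sub_ge_le (hX : ∀ i, Measurable (X i)) (hindep : iIndepFun X μ)
    (hval : ∀ i ω, X i ω ∈ Set.Icc (0 : ℝ) 1) (hmean : ∀ i, ∫ ω, X i ω ∂μ = m) {L : ℝ}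
    (hL : 0 < L) :
    μ.real {ω | √(2 * (∑ i, Var[X i; μ]) * L) + L / 3 ≤ |∑ i, (X i ω - m)|} ≤
      2 * exp (-L) := by
  have hint : ∀ i, Integrable (X i) μ := fun i ↦
    .of_mem_Icc 0 1 (hX i).aemeasurable (.of_forall (hval i))
  have hXm : ∀ i ω, |X i ω - m| ≤ 1 := fun i ω ↦ by
    have hm := hmean i ▸ integral_mem_Icc_of_forall_mem_Icc (μ := μ) (hX i) (hval i)
    exact abs_sub_le_of_nonneg_of_le (hval i ω).1 (hval i ω).2 hm.1 hm.2
  simpa using measureReal_abs_sum_ge_le_of_abs_le (Y := fun i ω ↦ X i ω - m)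
    (fun i ↦ (hX i).sub_const m)
    (hindep.comp (fun _ x ↦ x - m) fun _ ↦ measurable_id.sub_const m) one_pos hL hXm
    (fun i ↦ by rw [integral_sub (hint i) (integrable_const m), hmean i]; simp)
    (Finset.sum_le_sum fun i _ ↦ by rw [variance_eq_integral (hX i).aemeasurable, hmean i])

lemma measureReal_sum_sq_sub_ge_le (hX : ∀ i, Measurable (X i)) (hindep : iIndepFun X μ)
    (hmean : ∀ i, ∫ ω, X i ω ∂μ = m) {b L : ℝ} (hb : ∀ i ω, |X i ω - m| ≤ b) (hb0 : 0 < b)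
    (hL : 0 < L) :
    μ.real {ω | √(2 * (b ^ 2 * ∑ i, Var[X i; μ]) * L) + b ^ 2 * L / 3
      ≤ ∑ i, Var[X i; μ] - ∑ i, (X i ω - m) ^ 2} ≤ exp (-L) := by
  have hZ : ∀ i, Measurable fun ω ↦ (X i ω - m) ^ 2 := fun i ↦ ((hX i).sub_const m).pow_const 2
  have hZb : ∀ i ω, (X i ω - m) ^ 2 ∈ Set.Icc 0 (b ^ 2) := fun i ω ↦
    ⟨sq_nonneg _, by simpa using pow_le_pow_left₀ (abs_nonneg _) (hb i ω) 2⟩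
  have hVar : ∀ i, ∫ ω, (X i ω - m) ^ 2 ∂μ = Var[X i; μ] := fun i ↦ by
    rw [variance_eq_integral (hX i).aemeasurable, hmean i]
  have hVarb : ∀ i, Var[X i; μ] ≤ b ^ 2 := fun i ↦ hVar i ▸
    (integral_mono_of_nonneg (.of_forall fun ω ↦ (hZb i ω).1) (integrable_const _)
      (.of_forall fun ω ↦ (hZb i ω).2)).trans (by simp)
  have hvar : ∀ i, ∫ ω, (Var[X i; μ] - (X i ω - m) ^ 2) ^ 2 ∂μ ≤ b ^ 2 * Var[X i; μ] := by
    intro i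
    have := variance_le_mul_integral_of_mem_Icc (μ := μ) (hZ i).aemeasurable (.of_forall (hZb i))
    rw [variance_eq_integral (hZ i).aemeasurable, hVar i] at this
    simpa only [sub_sq_comm] using this
  have h := measureReal_sum_ge_le_of_abs_le (Y := fun i ω ↦ Var[X i; μ] - (X i ω - m) ^ 2)
    (fun i ↦ measurable_const.sub (hZ i))
    (hindep.comp (fun i x ↦ Var[X i; μ] - (x - m) ^ 2)
      fun _ ↦ measurable_const.sub ((measurable_id.sub_const m).pow_const 2))
    (by positivity) hL
    (fun i ω ↦ abs_sub_le_of_nonneg_of_le (variance_nonneg _ _) (hVarb i) (hZb i ω).1 (hZb i ω).2)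
    (fun i ↦ by
      rw [integral_sub (integrable_const _)
        (.of_mem_Icc 0 (b ^ 2) (hZ i).aemeasurable (.of_forall (hZb i))), hVar i]
      simp)
    ((Finset.sum_le_sum fun i _ ↦ hvar i).trans_eq (Finset.mul_sum _ _ _).symm)
  simpa only [Finset.sum_sub_distrib] using h

end Probability

theorem stmt16_general {Ω : Type*} [MeasurableSpace Ω] (μ : Measure Ω) [IsProbabilityMeasure μ]
    (t : ℕ) (ht : 1 ≤ t) (m : ℝ)
    (X : Fin t → Ω → ℝ) (hmeas : ∀ i, Measurable (X i))
    (hval : ∀ i ω, X i ω ∈ Set.Icc (0:ℝ) 1)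
    (hindep : iIndepFun X μ)
    (hmean : ∀ i, ∫ ω, X i ω ∂μ = m)
    (δ : ℝ) (hδ : δ ∈ Set.Ioo (0:ℝ) 1) :
    ENNReal.ofReal (1 - δ) ≤
      μ {ω | |(1/t) * ∑ s, X s ω - m| ≤
        Real.sqrt (2 * ((1/t) * ∑ s, (X s ω - (1/t) * ∑ r, X r ω)^2)
            * Real.log (3/δ) / t)
          + 3 * Real.log (3/δ) / t} := by
  obtain ⟨hδ0, hδ1⟩ := hδ
  set L := Real.log (3 / δ)
  have hL : 0 < L := Real.log_pos (by rw [lt_div_iff₀ hδ0]; linarith)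
  have hm : m ∈ Set.Icc (0 : ℝ) 1 :=
    hmean ⟨0, ht⟩ ▸ integral_mem_Icc_of_forall_mem_Icc (hmeas _) (hval _)
  have hσb := sum_variance_le hmeas hval hmean
  rw [Fintype.card_fin, ← max_mul_one_sub_max] at hσb
  have hXb : ∀ i ω, |X i ω - m| ≤ max m (1 - m) := fun i ω ↦ by
    simpa [max_comm] using abs_sub_le_max_sub (hval i ω).1 (hval i ω).2 m
  have hb : 1 / 2 ≤ max m (1 - m) := by linarith [le_max_left m (1 - m), le_max_right m (1 - m)]
  refine ofReal_one_sub_le_measure_of_compl_subset (fun ω hω ↦ ?_)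
    ((measureReal_union_le _ _).trans (add_le_add
      (measureReal_abs_sum_sub_ge_le hmeas hindep hval hmean hL)
      (measureReal_sum_sq_sub_ge_le hmeas hindep hmean hXb (by linarith) hL)) |>.trans_eq ?_)
  · simp only [Set.mem_compl_iff, Set.mem_union, Set.mem_ofPred_eq, not_or, not_le] at hω
    exact abs_mean_sub_le_of_bernstein_bounds ht (X · ω) hL.le
      (Finset.sum_nonneg fun i _ ↦ variance_nonneg _ _) hb (max_le hm.2 (by linarith [hm.1])) hσb
      hω.1.le hω.2.le
  · rw [exp_neg, exp_log (by positivity), inv_div]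
    ring

/-- empirical Bernstein inequality, Audibert–Munos–Szepesvári:
Let `X_1,…,X_t` be i.i.d. `[0,1]`-valued random variables with mean `m`. With
`X̄ = (1/t)∑_s X_s` and `V = (1/t)∑_s (X_s − X̄)²`, for any `δ ∈ (0,1)`, with
probability at least `1 − δ`,
`|X̄ − m| ≤ √(2·V·ln(3/δ)/t) + 3·ln(3/δ)/t`. -/
theorem stmt16 {Ω : Type*} [MeasurableSpace Ω] (μ : Measure Ω) [IsProbabilityMeasure μ]
    (t : ℕ) (ht : 1 ≤ t) (m : ℝ)
    (X : Fin t → Ω → ℝ) (hmeas : ∀ i, Measurable (X i))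
    (hval : ∀ i ω, X i ω ∈ Set.Icc (0:ℝ) 1)
    (hindep : iIndepFun X μ)
    (hident : ∀ i j, IdentDistrib (X i) (X j) μ μ)
    (hmean : ∀ i, ∫ ω, X i ω ∂μ = m)
    (δ : ℝ) (hδ : δ ∈ Set.Ioo (0:ℝ) 1) :
    ENNReal.ofReal (1 - δ) ≤
      μ {ω | |(1/t) * ∑ s, X s ω - m| ≤
        Real.sqrt (2 * ((1/t) * ∑ s, (X s ω - (1/t) * ∑ r, X r ω)^2)
            * Real.log (3/δ) / t)
          + 3 * Real.log (3/δ) / t} :=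
  stmt16_general μ t ht m X hmeas hval hindep hmean δ hδ
end
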